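/- Let H be an n×n real matrix and Σ, W symmetric positive definite n×n matrices, M symmetric positive definite, satisfying Σ = H(Σ⁻¹ + M)⁻¹Hᵀ + W. Then tr(Σ) − tr(W) ≤ tr(HᵀH)/λ_min(M). -/

import Mathlib

/-!
With `B = Σ⁻¹ + M`, the Riccati equation gives `tr Σ - tr W = tr (H B⁻¹ Hᵀ)`. In the Loewner
order `λ_min(M) • 1 ≤ M ≤ B`, and inversion reverses this order, so `B⁻¹ ≤ λ_min(M)⁻¹ • 1`;
conjugating by `H` and taking traces gives `tr (H B⁻¹ Hᵀ) ≤ tr (H Hᵀ) / λ_min(M)`.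
-/

open scoped MatrixOrder ComplexOrder

namespace Matrix

variable {n 𝕜 : Type*} [Fintype n] [DecidableEq n] [RCLike 𝕜]

theorem IsHermitian.smul_one_le_iff_le_eigenvalues {A : Matrix n n 𝕜} (hA : A.IsHermitian)
    {c : ℝ} : c • (1 : Matrix n n 𝕜) ≤ A ↔ ∀ i, c ≤ hA.eigenvalues i := by
  rw [← Algebra.algebraMap_eq_smul_one, algebraMap_le_iff_le_spectrum hA.isSelfAdjoint,
    hA.spectrum_real_eq_range_eigenvalues, Set.forall_mem_range]

theorem IsHermitian.iInf_eigenvalues_smul_one_le {A : Matrix n n 𝕜} (hA : A.IsHermitian) :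
    (⨅ i, hA.eigenvalues i) • (1 : Matrix n n 𝕜) ≤ A :=
  hA.smul_one_le_iff_le_eigenvalues.mpr fun i ↦ ciInf_le (Set.finite_range _).bddBelow i

theorem PosDef.iInf_eigenvalues_pos [Nonempty n] {A : Matrix n n 𝕜} (hA : A.PosDef) :
    0 < ⨅ i, hA.1.eigenvalues i := by
  obtain ⟨i, hi⟩ := exists_eq_ciInf_of_finite (f := hA.1.eigenvalues)
  exact hi ▸ hA.eigenvalues_pos i

theorem PosDef.smul_inv_le_one_of_smul_one_le {B : Matrix n n 𝕜} (hB : B.PosDef) {c : ℝ}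
    (h : c • (1 : Matrix n n 𝕜) ≤ B) : c • B⁻¹ ≤ 1 := by
  set S := CFC.sqrt B
  have hSS : S * S = B := CFC.sqrt_mul_sqrt_self B hB.posSemidef.nonneg
  have hS : IsUnit S.det := by
    rw [← isUnit_iff_isUnit_det]
    exact isUnit_of_mul_isUnit_left (hSS ▸ hB.isUnit)
  have hSinv : IsSelfAdjoint S⁻¹ := (IsSelfAdjoint.of_nonneg (CFC.sqrt_nonneg B)).isHermitian.inv
  have hleft : S⁻¹ * (c • 1) * S⁻¹ = c • B⁻¹ := by
    rw [mul_smul_comm, mul_one, smul_mul_assoc, ← mul_inv_rev, hSS]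
  have hright : S⁻¹ * B * S⁻¹ = 1 := by
    rw [← hSS, ← mul_assoc, mul_nonsing_inv_cancel_right _ _ hS, nonsing_inv_mul _ hS]
  simpa only [hleft, hright] using hSinv.conjugate_le_conjugate h

theorem PosDef.inv_le_inv_smul_one_of_smul_one_le {B : Matrix n n 𝕜} (hB : B.PosDef) {c : ℝ}
    (hc : 0 < c) (h : c • (1 : Matrix n n 𝕜) ≤ B) : B⁻¹ ≤ c⁻¹ • 1 := by
  have := (le_iff.mp (hB.smul_inv_le_one_of_smul_one_le h)).smul (inv_nonneg.mpr hc.le)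
  rwa [smul_sub, smul_smul, inv_mul_cancel₀ hc.ne', one_smul] at this

theorem trace_mul_inv_mul_transpose_le {m : Type*} [Fintype m] {B : Matrix n n ℝ}
    (hB : B.PosDef) {c : ℝ} (hc : 0 < c) (h : c • (1 : Matrix n n ℝ) ≤ B) (H : Matrix m n ℝ) :
    (H * B⁻¹ * Hᵀ).trace ≤ (Hᵀ * H).trace / c := by
  have hpsd := (le_iff.mp (hB.inv_le_inv_smul_one_of_smul_one_le hc h)).mul_mul_conjTranspose_same H
  have hconj : H * B⁻¹ * Hᵀ ≤ H * (c⁻¹ • (1 : Matrix n n ℝ)) * Hᵀ := by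
    simpa only [le_iff, ← Matrix.mul_sub, ← Matrix.sub_mul, conjTranspose_eq_transpose_of_trivial]
      using hpsd
  calc (H * B⁻¹ * Hᵀ).trace
      ≤ (H * (c⁻¹ • (1 : Matrix n n ℝ)) * Hᵀ).trace := (tracePositiveLinearMap m ℝ ℝ).mono hconj
    _ = (Hᵀ * H).trace / c := by
      rw [Matrix.mul_smul, Matrix.mul_one, Matrix.smul_mul, trace_smul, trace_mul_comm,
        smul_eq_mul, inv_mul_eq_div]

end Matrix

open Matrix

theorem stmt_10_general (n : ℕ) (hn : 0 < n) (H Sig W M : Matrix (Fin n) (Fin n) ℝ)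
    (hSig : Sig.PosDef) (hM : M.PosDef)
    (hRic : Sig = H * (Sig⁻¹ + M)⁻¹ * Hᵀ + W) :
    Sig.trace - W.trace ≤ (Hᵀ * H).trace / ⨅ i, hM.1.eigenvalues i := by
  have : Nonempty (Fin n) := ⟨⟨0, hn⟩⟩
  have hM_le : M ≤ Sig⁻¹ + M := le_add_of_nonneg_left hSig.inv.posSemidef.nonneg
  rw [← trace_sub, sub_eq_of_eq_add hRic]
  exact trace_mul_inv_mul_transpose_le (hSig.inv.add_posSemidef hM.posSemidef)
    hM.iInf_eigenvalues_pos (hM.1.iInf_eigenvalues_smul_one_le.trans hM_le) H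

theorem stmt_10 (n : ℕ) (hn : 0 < n) (H Sig W M : Matrix (Fin n) (Fin n) ℝ)
    (hSig : Sig.PosDef) (hW : W.PosDef) (hM : M.PosDef)
    (hRic : Sig = H * (Sig⁻¹ + M)⁻¹ * Hᵀ + W) :
    Sig.trace - W.trace ≤ (Hᵀ * H).trace / ⨅ i, hM.1.eigenvalues i :=
  stmt_10_general n hn H Sig W M hSig hM hRic
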